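/- arXiv:2002.09524 — 6 statements merged into one kernel-verified Lean document; each statement's English description precedes it below -/
import Mathlib

section
/- Let O be an invertible t×t matrix over F_2 that has a column of Hamming weight r, where r is even. Then the probability that O preserves the Hamming weight of a uniformly random vector y ∈ F_2^t is at most 1/2. -/
/-!
Adding the basis vector `e_j` to `y` flips the parity of `h(y)` but, since column `j` of `O` has
even weight, leaves the parity of `h(Oy)` unchanged (over `F₂` the parity of a weight is the sum
of the entries). So `y ↦ y + e_j` maps the weight-preserved vectors injectively into their
complement, which therefore contains at most half of `F₂^t`.
-/

open Finset Matrix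

lemma hammingNorm_cast_zmod_two {ι : Type*} [Fintype ι] (x : ι → ZMod 2) :
    ((hammingNorm x : ℕ) : ZMod 2) = ∑ i, x i := by
  have h_ne_zero : ∀ a : ZMod 2, a ≠ 0 → a = 1 := by decide
  rw [hammingNorm, card_eq_sum_ones, Nat.cast_sum, sum_filter]
  refine sum_congr rfl fun i _ => ?_
  by_cases h : x i = 0
  · simp [h]
  · simp [h_ne_zero _ h]

lemma hammingNorm_mulVec_add_single_ne {m n : Type*} [Fintype m] [Fintype n] [DecidableEq n]
    (O : Matrix m n (ZMod 2)) (j : n) (hcol : Even (hammingNorm fun i => O i j))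
    (y : n → ZMod 2) (hy : hammingNorm (O *ᵥ y) = hammingNorm y) :
    hammingNorm (O *ᵥ (y + Pi.single j 1)) ≠ hammingNorm (y + Pi.single j 1) := by
  intro hye
  have hcol_sum : ∑ i, O i j = 0 := by
    rw [← hammingNorm_cast_zmod_two, (ZMod.natCast_eq_zero_iff_even).mpr hcol]
  have hy' := congrArg (Nat.cast : ℕ → ZMod 2) hy
  have hye' := congrArg (Nat.cast : ℕ → ZMod 2) hye
  simp only [hammingNorm_cast_zmod_two, mulVec_add, mulVec_single_one,
    Pi.add_apply, sum_add_distrib] at hy' hye'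
  simp [col, hcol_sum, hy'] at hye'

lemma two_mul_card_le_of_injective_of_mapsTo_compl {α : Type*} [Fintype α] (s : Finset α)
    (f : α → α) (hf : Function.Injective f) (hs : ∀ x ∈ s, f x ∉ s) :
    2 * #s ≤ Fintype.card α := by
  classical
  have h : #s ≤ #sᶜ :=
    card_le_card_of_injOn f (fun x hx => mem_compl.mpr (hs x hx)) hf.injOn
  rw [card_compl] at h
  omega

theorem stmt_0_general (t r : ℕ) (O : Matrix (Fin t) (Fin t) (ZMod 2))
    (j : Fin t)
    (hcol : hammingNorm (fun i => O i j) = r) (hr : Even r) :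
    ((univ.filter (fun y : Fin t → ZMod 2 =>
        hammingNorm (O.mulVec y) = hammingNorm y)).card : ℚ) / 2 ^ t ≤ 1 / 2 := by
  set S := univ.filter fun y : Fin t → ZMod 2 => hammingNorm (O.mulVec y) = hammingNorm y
  have hS : 2 * #S ≤ 2 ^ t := by
    have := two_mul_card_le_of_injective_of_mapsTo_compl S (· + Pi.single j 1)
      (add_left_injective _) fun y hy hye => hammingNorm_mulVec_add_single_ne O j (hcol ▸ hr) y
        (mem_filter.mp hy).2 (mem_filter.mp hye).2
    simpa using this
  rw [div_le_div_iff₀ (by positivity) (by norm_num)]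
  exact_mod_cast (by omega : #S * 2 ≤ 1 * 2 ^ t)

/-- If an invertible matrix `O` over `F₂` has a column of even Hamming weight `r`,
then the probability (over uniform `y ∈ F₂^t`) that `O` preserves the Hamming
weight of `y` is at most `1/2`. -/
theorem stmt_0 (t r : ℕ) (O : Matrix (Fin t) (Fin t) (ZMod 2))
    (hO : IsUnit O) (j : Fin t)
    (hcol : hammingNorm (fun i => O i j) = r) (hr : Even r) :
    ((univ.filter (fun y : Fin t → ZMod 2 =>
        hammingNorm (O.mulVec y) = hammingNorm y)).card : ℚ) / 2 ^ t ≤ 1 / 2 :=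
  stmt_0_general t r O j hcol hr
end

section
/- Let O be an invertible t×t matrix over F_2 that has a column of Hamming weight r, where r is odd. Then the probability over uniformly random y ∈ F_2^t that h(Oy) = h(y) is at most 1/2 + 2^{-(r+1)} * binomial(r+1, (r+1)/2). -/
/-!
Let `c = O eⱼ` be the column of weight `r = 2s + 1` and `A` the set of `y` with `h(Oy) = h(y)`.
Since `y ↦ y + eⱼ` is a bijection, `2|A| ≤ 2^t + |B|`, where `B` consists of the `y ∈ A` with
`y + eⱼ ∈ A`. For `y ∈ B`, the change `h(Oy + c) - h(Oy) = r - 2|supp(Oy) ∩ supp c|` equals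
`h(y + eⱼ) - h(y) = ±1`, so `Oy` meets `supp c` in `s` or `s + 1` places. As `O` is a bijection,
at most `(binom(r, s) + binom(r, s + 1)) 2^(t-r) = binom(r + 1, s + 1) 2^(t-r)` vectors `y` do so.
-/

open Finset Matrix

section

variable {ι : Type*} [Fintype ι]

def hammingOverlap (x y : ι → ZMod 2) : ℕ := #{i | x i ≠ 0 ∧ y i ≠ 0}

theorem hammingNorm_add_add_two_mul_hammingOverlap (x y : ι → ZMod 2) :
    hammingNorm (x + y) + 2 * hammingOverlap x y = hammingNorm x + hammingNorm y := by
  have pointwise : ∀ a b : ZMod 2, ((if a + b ≠ 0 then 1 else 0) +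
      2 * if a ≠ 0 ∧ b ≠ 0 then 1 else 0 : ℕ) = (if a ≠ 0 then 1 else 0) + if b ≠ 0 then 1 else 0 := by
    decide
  simp only [hammingNorm, hammingOverlap, card_filter, mul_sum, ← sum_add_distrib]
  exact sum_congr rfl fun i _ => pointwise (x i) (y i)

theorem hammingOverlap_le_hammingNorm_right (x y : ι → ZMod 2) :
    hammingOverlap x y ≤ hammingNorm y :=
  card_le_card (monotone_filter_right _ fun _ _ => And.right)

theorem hammingOverlap_eq_hammingNorm_restrict (x c : ι → ZMod 2) :
    hammingOverlap x c = hammingNorm fun i : {i // c i ≠ 0} => x i := by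
  rw [hammingOverlap, hammingNorm, ← Fintype.card_subtype, ← Fintype.card_subtype]
  exact (Fintype.card_congr ((Equiv.subtypeSubtypeEquivSubtypeInter (c · ≠ 0) (x · ≠ 0)).trans
    (Equiv.subtypeEquivRight fun _ => and_comm))).symm

theorem hammingOverlap_eq_or_eq_succ_of_hammingNorm_eq {x y c w : ι → ZMod 2} {s : ℕ}
    (hc : hammingNorm c = 2 * s + 1) (hw : hammingNorm w = 1)
    (hxy : hammingNorm x = hammingNorm y) (hxy' : hammingNorm (x + c) = hammingNorm (y + w)) :
    hammingOverlap x c = s ∨ hammingOverlap x c = s + 1 := by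
  have hx := hammingNorm_add_add_two_mul_hammingOverlap x c
  have hy := hammingNorm_add_add_two_mul_hammingOverlap y w
  have hyw := hammingOverlap_le_hammingNorm_right y w
  omega

variable [DecidableEq ι]

theorem hammingNorm_single_one (j : ι) : hammingNorm (Pi.single j 1 : ι → ZMod 2) = 1 := by
  simp [hammingNorm, Pi.single_apply, filter_eq']

def funZModTwoEquivFinset : (ι → ZMod 2) ≃ Finset ι where
  toFun z := {i | z i ≠ 0}
  invFun T i := if i ∈ T then 1 else 0
  left_inv z := funext fun i => by
    rcases (by decide : ∀ a : ZMod 2, a = 0 ∨ a = 1) (z i) with h | h <;> simp [h]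
  right_inv T := by ext; simp

theorem card_filter_hammingNorm_eq (m : ℕ) :
    #{z : ι → ZMod 2 | hammingNorm z = m} = (Fintype.card ι).choose m := by
  rw [← Fintype.card_finset_len, ← Fintype.card_subtype]
  exact Fintype.card_congr (funZModTwoEquivFinset.subtypeEquiv fun _ => Iff.rfl)

theorem card_filter_hammingOverlap_eq (c : ι → ZMod 2) (m : ℕ) :
    #{z : ι → ZMod 2 | hammingOverlap z c = m} =
      (hammingNorm c).choose m * 2 ^ (Fintype.card ι - hammingNorm c) := by
  let e := ((Equiv.piEquivPiSubtypeProd (c · ≠ 0) fun _ => ZMod 2).subtypeEquiv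
      (p := fun z => hammingOverlap z c = m) (q := fun u => hammingNorm u.1 = m)
      fun z => by rw [hammingOverlap_eq_hammingNorm_restrict]; rfl).trans
    (Equiv.prodSubtypeFstEquivSubtypeProd
      (p := fun u : {i // c i ≠ 0} → ZMod 2 => hammingNorm u = m))
  rw [← Fintype.card_subtype, Fintype.card_congr e, Fintype.card_prod, Fintype.card_subtype,
    card_filter_hammingNorm_eq, Fintype.card_fun, Fintype.card_subtype_compl (c · ≠ 0),
    ZMod.card, Fintype.card_subtype]
  rfl

theorem card_filter_comp_mulVec_of_isUnit {R : Type*} [CommRing R] [Fintype R]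
    {O : Matrix ι ι R} (hO : IsUnit O) (P : (ι → R) → Prop) [DecidablePred P] :
    #{y | P (O *ᵥ y)} = #{z | P z} := by
  have hsurj : Function.Surjective O.mulVec := mulVec_surjective_iff_isUnit.mpr hO
  exact card_equiv (Equiv.ofBijective _ ⟨Finite.injective_iff_surjective.mpr hsurj, hsurj⟩)
    fun _ => by simp only [mem_filter, mem_univ, true_and]; rfl

theorem card_filter_hammingNorm_mulVec_eq_and_add_le {O : Matrix ι ι (ZMod 2)} (hO : IsUnit O)
    {w : ι → ZMod 2} {s : ℕ} (hOw : hammingNorm (O *ᵥ w) = 2 * s + 1) (hw : hammingNorm w = 1) :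
    #{y | hammingNorm (O *ᵥ y) = hammingNorm y ∧
        hammingNorm (O *ᵥ (y + w)) = hammingNorm (y + w)} ≤
      (2 * s + 1 + 1).choose (s + 1) * 2 ^ (Fintype.card ι - (2 * s + 1)) := by
  have hlevels : ({y | hammingNorm (O *ᵥ y) = hammingNorm y ∧
        hammingNorm (O *ᵥ (y + w)) = hammingNorm (y + w)} : Finset (ι → ZMod 2)) ⊆
      ({y | hammingOverlap (O *ᵥ y) (O *ᵥ w) = s} : Finset (ι → ZMod 2)) ∪
        ({y | hammingOverlap (O *ᵥ y) (O *ᵥ w) = s + 1} : Finset (ι → ZMod 2)) := by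
    intro y hy
    simp only [mem_filter, mem_univ, true_and, mulVec_add] at hy
    simpa using hammingOverlap_eq_or_eq_succ_of_hammingNorm_eq hOw hw hy.1 hy.2
  calc _ ≤ _ := card_le_card hlevels
    _ ≤ _ := card_union_le _ _
    _ = _ := by
      rw [card_filter_comp_mulVec_of_isUnit hO (hammingOverlap · (O *ᵥ w) = s),
        card_filter_comp_mulVec_of_isUnit hO (hammingOverlap · (O *ᵥ w) = s + 1),
        card_filter_hammingOverlap_eq, card_filter_hammingOverlap_eq, hOw, ← add_mul,
        ← Nat.choose_succ_succ']

end

theorem two_mul_card_filter_le_card_add_card_filter_and {α : Type*} [Fintype α] [DecidableEq α]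
    (P : α → Prop) [DecidablePred P] {σ : α → α} (hσ : Function.Injective σ) :
    2 * #{a | P a} ≤ Fintype.card α + #{a | P a ∧ P (σ a)} := by
  let e := Equiv.ofBijective σ (Finite.injective_iff_bijective.mp hσ)
  set A : Finset α := {a | P a}
  have hinter : A ∩ A.map e.symm.toEmbedding = ({a | P a ∧ P (σ a)} : Finset α) := by
    ext; simp [A, mem_map_equiv, e]
  calc 2 * #A = #A + #(A.map e.symm.toEmbedding) := by rw [card_map]; ring
    _ = #(A ∪ A.map e.symm.toEmbedding) + #{a | P a ∧ P (σ a)} := by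
      rw [← hinter, card_union_add_card_inter]
    _ ≤ Fintype.card α + #{a | P a ∧ P (σ a)} := by gcongr; exact card_le_univ _

theorem div_two_pow_le_half_add_div {a b r t : ℕ} (hrt : r ≤ t)
    (h : 2 * a ≤ 2 ^ t + b * 2 ^ (t - r)) : (a : ℚ) / 2 ^ t ≤ 1 / 2 + b / 2 ^ (r + 1) := by
  have h' : 2 * a * 2 ^ r ≤ (2 ^ r + b) * 2 ^ t :=
    calc 2 * a * 2 ^ r ≤ (2 ^ t + b * 2 ^ (t - r)) * 2 ^ r := by gcongr
      _ = _ := by rw [add_mul, mul_assoc, ← pow_add 2 (t - r), Nat.sub_add_cancel hrt]; ring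
  have hq : (2 * a * 2 ^ r : ℚ) ≤ (2 ^ r + b) * 2 ^ t := by exact_mod_cast h'
  rw [div_le_iff₀ (by positivity), pow_succ]
  field_simp
  linarith

/-- If an invertible matrix `O` over `F₂` has a column of odd Hamming weight `r`,
then the probability (over uniform `y ∈ F₂^t`) that `h(Oy) = h(y)` is at most
`1/2 + 2^{-(r+1)} * binom(r+1, (r+1)/2)`. -/
theorem stmt_1 (t r : ℕ) (O : Matrix (Fin t) (Fin t) (ZMod 2))
    (hO : IsUnit O) (j : Fin t)
    (hcol : hammingNorm (fun i => O i j) = r) (hr : Odd r) :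
    ((univ.filter (fun y : Fin t → ZMod 2 =>
        hammingNorm (O.mulVec y) = hammingNorm y)).card : ℚ) / 2 ^ t
      ≤ 1 / 2 + ((r + 1).choose ((r + 1) / 2) : ℚ) / 2 ^ (r + 1) := by
  obtain ⟨s, rfl⟩ := hr
  have hOe : hammingNorm (O *ᵥ Pi.single j 1) = 2 * s + 1 := by rwa [mulVec_single_one]
  have hpairs := two_mul_card_filter_le_card_add_card_filter_and
    (fun y => hammingNorm (O *ᵥ y) = hammingNorm y) (add_left_injective (Pi.single j 1))
  have hlevels := card_filter_hammingNorm_mulVec_eq_and_add_le hO hOe (hammingNorm_single_one j)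
  rw [Fintype.card_fun, ZMod.card, Fintype.card_fin] at hpairs
  rw [Fintype.card_fin] at hlevels
  have hrt : 2 * s + 1 ≤ t := hcol ▸ hammingNorm_le_card_fintype.trans_eq (Fintype.card_fin t)
  rw [show (2 * s + 1 + 1) / 2 = s + 1 by omega]
  exact div_two_pow_le_half_add_div hrt (hpairs.trans (Nat.add_le_add_left hlevels _))
end

section
/- Let y be uniformly random in F_2^t and let v ∈ F_2^t be a fixed vector of odd Hamming weight r. Then the probability that |h(y+v) - h(y)| = 1 equals 2^{-r} * binomial(r+1, (r+1)/2). -/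
/-!
Over `F₂` one has `h(y + v) = h(y) + h(v) - 2 h(v * y)` with `*` the coordinatewise product, so
for `h(v) = r = 2s + 1` the change of weight is `±1` exactly when `y` has `s` or `s + 1` ones on
the support of `v`. The coordinates of `y` on that support and off it are independent, so these
events have `(binom(r, s) + binom(r, s + 1)) 2^(t - r) = binom(r + 1, s + 1) 2^(t - r)` elements.
-/

open Finset

variable {ι : Type*} [Fintype ι]

theorem hammingNorm_add_zmod_two (x y : ι → ZMod 2) :
    (hammingNorm (x + y) : ℤ) = hammingNorm x + hammingNorm y - 2 * hammingNorm (x * y) := by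
  have pointwise : ∀ a b : ZMod 2, (if a + b ≠ 0 then (1 : ℤ) else 0) =
      (if a ≠ 0 then 1 else 0) + (if b ≠ 0 then 1 else 0)
        - 2 * if a * b ≠ 0 then 1 else 0 := by
    decide
  simp only [hammingNorm, card_filter]
  push_cast
  rw [mul_sum, ← sum_add_distrib, ← sum_sub_distrib]
  exact sum_congr rfl fun i _ => pointwise (x i) (y i)

theorem hammingNorm_mul_eq_hammingNorm_restrict (v y : ι → ZMod 2) :
    hammingNorm (v * y) = hammingNorm (fun i : {i // v i ≠ 0} => y i) := by
  have mul_ne_zero_iff : ∀ a b : ZMod 2, a * b ≠ 0 ↔ a ≠ 0 ∧ b ≠ 0 := by decide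
  simp only [hammingNorm, Pi.mul_apply, mul_ne_zero_iff, ← Fintype.card_subtype]
  exact Fintype.card_congr (Equiv.subtypeSubtypeEquivSubtypeInter _ (fun i => y i ≠ 0)).symm

theorem card_hammingNorm_eq [DecidableEq ι] (a : ℕ) :
    #{z : ι → ZMod 2 | hammingNorm z = a} = (Fintype.card ι).choose a := by
  have eq_one_of_ne_zero : ∀ b : ZMod 2, b ≠ 0 → b = 1 := by decide
  rw [← card_univ, ← card_powersetCard]
  refine card_bij' (fun z _ => ({i | z i ≠ 0} : Finset ι))
    (fun s _ i => if i ∈ s then 1 else 0) ?_ ?_ ?_ ?_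
  · intro z hz
    simpa [mem_powersetCard, hammingNorm] using hz
  · intro s hs
    simp_all [hammingNorm]
  · intro z _
    funext i
    by_cases h : z i = 0 <;> simp [h, eq_one_of_ne_zero]
  · intro s _
    ext i
    by_cases h : i ∈ s <;> simp [h]

theorem card_hammingNorm_mul_eq [DecidableEq ι] (v : ι → ZMod 2) (a : ℕ) :
    #{y : ι → ZMod 2 | hammingNorm (v * y) = a}
      = (hammingNorm v).choose a * 2 ^ (Fintype.card ι - hammingNorm v) := by
  let e := Equiv.piEquivPiSubtypeProd (fun i => v i ≠ 0) (fun _ => ZMod 2)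
  rw [card_equiv e (t := ({z | hammingNorm z = a} : Finset _) ×ˢ univ) fun y => by
    simp [e, hammingNorm_mul_eq_hammingNorm_restrict]]
  have card_support : Fintype.card {i // v i ≠ 0} = hammingNorm v := Fintype.card_subtype _
  have card_zeros : Fintype.card {i // ¬v i ≠ 0} = Fintype.card ι - hammingNorm v := by
    rw [Fintype.card_subtype_compl, card_support]
  rw [card_product, card_hammingNorm_eq, card_univ, Fintype.card_fun, ZMod.card, card_support,
    card_zeros]

theorem abs_hammingNorm_add_sub_eq_one_iff {v : ι → ZMod 2} {s : ℕ}
    (hv : hammingNorm v = 2 * s + 1) (y : ι → ZMod 2) :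
    |(hammingNorm (y + v) : ℤ) - hammingNorm y| = 1 ↔
      hammingNorm (v * y) = s ∨ hammingNorm (v * y) = s + 1 := by
  rw [hammingNorm_add_zmod_two, hv, mul_comm y v, abs_eq zero_le_one]
  omega

theorem card_abs_hammingNorm_add_sub_eq_one [DecidableEq ι] {v : ι → ZMod 2}
    (hv : Odd (hammingNorm v)) :
    #{y : ι → ZMod 2 | |(hammingNorm (y + v) : ℤ) - hammingNorm y| = 1}
      = (hammingNorm v + 1).choose ((hammingNorm v + 1) / 2)
        * 2 ^ (Fintype.card ι - hammingNorm v) := by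
  obtain ⟨s, hs⟩ := hv
  have half : (2 * s + 1 + 1) / 2 = s + 1 := by omega
  rw [filter_congr fun y _ => abs_hammingNorm_add_sub_eq_one_iff hs y, filter_or,
    card_union_of_disjoint (disjoint_filter.mpr fun _ _ h₁ h₂ => by omega),
    card_hammingNorm_mul_eq, card_hammingNorm_mul_eq, hs, half,
    Nat.choose_succ_succ (2 * s + 1) s, add_mul]

/-- For a fixed vector `v ∈ F₂^t` of odd Hamming weight `r`, the probability
over uniform `y ∈ F₂^t` that `|h(y+v) - h(y)| = 1` equals
`2^{-r} * binom(r+1, (r+1)/2)`. -/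
theorem stmt_2 (t r : ℕ) (v : Fin t → ZMod 2) (hv : hammingNorm v = r)
    (hr : Odd r) :
    ((univ.filter (fun y : Fin t → ZMod 2 =>
        |(hammingNorm (y + v) : ℤ) - (hammingNorm y : ℤ)| = 1)).card : ℚ) / 2 ^ t
      = ((r + 1).choose ((r + 1) / 2) : ℚ) / 2 ^ r := by
  have hrt : r ≤ t := hv ▸ hammingNorm_le_card_fintype.trans_eq (Fintype.card_fin t)
  have two_pow_t : (2 : ℚ) ^ t = 2 ^ r * 2 ^ (t - r) := by
    rw [← pow_add, Nat.add_sub_cancel' hrt]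
  rw [card_abs_hammingNorm_add_sub_eq_one (hv ▸ hr), hv, Fintype.card_fin, two_pow_t]
  push_cast
  exact mul_div_mul_right _ _ (by positivity : (2 : ℚ) ^ (t - r) ≠ 0)
end

section
/- Let M, L be positive integers with M ≥ L ≥ 1 and let m be a real number with 2^m > M − L. Then Σ_{k=0}^{M−L} p(M,k) · 2^{−m(M−k)} ≤ M^{L+1} · 2^{−mL}, where p(M,k) is the number of permutations of M elements with exactly k fixed points. -/
open Finset

/-!
Bound `p(M,k) = C(M,k)·D(M−k)` by the falling factorial `M(M−1)⋯(k+1)` of length `M − k = L + j`,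
and that by `M^L·(M−L)^j`. With `x = 2^m ≥ M − L` each term is then at most `M^L / x^L`,
and there are `M − L + 1 ≤ M` terms.
-/

theorem numDerangements_le_factorial (n : ℕ) : numDerangements n ≤ n.factorial := by
  simpa only [Fintype.card_perm, Fintype.card_fin,
    card_derangements_fin_eq_numDerangements] using
    Fintype.card_subtype_le (· ∈ derangements (Fin n))

theorem Nat.choose_mul_numDerangements_le_descFactorial {n k : ℕ} (hk : k ≤ n) :
    n.choose k * numDerangements (n - k) ≤ n.descFactorial (n - k) := by
  rw [descFactorial_eq_factorial_mul_choose, choose_symm hk, mul_comm]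
  exact Nat.mul_le_mul_right _ (numDerangements_le_factorial _)

theorem Nat.descFactorial_add_le (n a b : ℕ) :
    n.descFactorial (a + b) ≤ n ^ a * (n - a) ^ b := by
  rw [← descFactorial_mul_descFactorial (Nat.le_add_right a b), Nat.add_sub_cancel_left, mul_comm]
  exact Nat.mul_le_mul (descFactorial_le_pow n a) (descFactorial_le_pow _ b)

theorem choose_mul_numDerangements_div_pow_le {M L k : ℕ} {x : ℝ} (hLM : L ≤ M) (hx : 0 < x)
    (hMLx : ((M - L : ℕ) : ℝ) ≤ x) (hk : k ≤ M - L) :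
    ((M.choose k * numDerangements (M - k) : ℕ) : ℝ) / x ^ (M - k) ≤ (M : ℝ) ^ L / x ^ L := by
  obtain ⟨j, hj⟩ : ∃ j, M - k = L + j := ⟨M - k - L, by omega⟩
  have hcount : M.choose k * numDerangements (M - k) ≤ M ^ L * (M - L) ^ j := by
    calc _ ≤ M.descFactorial (M - k) := Nat.choose_mul_numDerangements_le_descFactorial (by omega)
      _ ≤ M ^ L * (M - L) ^ j := hj ▸ Nat.descFactorial_add_le M L j
  have hxpow : x ^ (M - k) = x ^ L * x ^ j := by rw [hj, pow_add]
  rw [div_le_div_iff₀ (by positivity) (by positivity), hxpow]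
  calc ((M.choose k * numDerangements (M - k) : ℕ) : ℝ) * x ^ L
      ≤ (M : ℝ) ^ L * ((M - L : ℕ) : ℝ) ^ j * x ^ L := by
        gcongr; exact_mod_cast hcount
    _ ≤ (M : ℝ) ^ L * (x ^ L * x ^ j) := by
        rw [mul_comm (x ^ L), ← mul_assoc]; gcongr

theorem sum_choose_mul_numDerangements_div_pow_le {M L : ℕ} {x : ℝ} (hL : 1 ≤ L) (hLM : L ≤ M)
    (hx : 0 < x) (hMLx : ((M - L : ℕ) : ℝ) ≤ x) :
    ∑ k ∈ range (M - L + 1), ((M.choose k * numDerangements (M - k) : ℕ) : ℝ) / x ^ (M - k)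
      ≤ (M : ℝ) ^ (L + 1) / x ^ L := by
  calc _ ≤ ∑ _k ∈ range (M - L + 1), (M : ℝ) ^ L / x ^ L :=
        sum_le_sum fun k hk =>
          choose_mul_numDerangements_div_pow_le hLM hx hMLx (Nat.lt_succ_iff.1 (mem_range.1 hk))
    _ = ((M - L + 1 : ℕ) : ℝ) * ((M : ℝ) ^ L / x ^ L) := by
        rw [sum_const, card_range, nsmul_eq_mul]
    _ ≤ (M : ℝ) * ((M : ℝ) ^ L / x ^ L) := by
        gcongr; exact_mod_cast (by omega : M - L + 1 ≤ M)
    _ = (M : ℝ) ^ (L + 1) / x ^ L := by ring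

/-- For `M ≥ L ≥ 1` and real `m` with `2^m > M − L`,
`Σ_{k=0}^{M−L} p(M,k)·2^{−m(M−k)} ≤ M^{L+1}·2^{−mL}`, where
`p(M,k) = C(M,k)·D(M−k)` counts permutations of `M` elements with `k` fixed points. -/
theorem stmt_7 (M L : ℕ) (m : ℝ) (hL : 1 ≤ L) (hLM : L ≤ M)
    (hm : ((M : ℝ) - L) < 2 ^ m) :
    ∑ k ∈ range (M - L + 1),
        ((M.choose k * numDerangements (M - k) : ℕ) : ℝ) *
          2 ^ (-(m * ((M : ℝ) - (k : ℝ))))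
      ≤ (M : ℝ) ^ (L + 1) * 2 ^ (-(m * (L : ℝ))) := by
  have two_rpow_neg (n : ℕ) : (2 : ℝ) ^ (-(m * n)) = (((2 : ℝ) ^ m) ^ n)⁻¹ := by
    rw [Real.rpow_neg zero_le_two, Real.rpow_mul zero_le_two, Real.rpow_natCast]
  have hMLx : ((M - L : ℕ) : ℝ) ≤ 2 ^ m := by rw [Nat.cast_sub hLM]; exact hm.le
  calc _ = ∑ k ∈ range (M - L + 1),
          ((M.choose k * numDerangements (M - k) : ℕ) : ℝ) / (2 ^ m) ^ (M - k) := by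
        refine sum_congr rfl fun k hk => ?_
        have hkM : k ≤ M := by have := mem_range.1 hk; omega
        rw [← Nat.cast_sub hkM, two_rpow_neg, div_eq_mul_inv]
    _ ≤ (M : ℝ) ^ (L + 1) / (2 ^ m) ^ L :=
        sum_choose_mul_numDerangements_div_pow_le hL hLM (by positivity) hMLx
    _ = _ := by rw [two_rpow_neg, div_eq_mul_inv]
end

section
/- Let A, B be linear operators on a finite-dimensional Hilbert space H, and consider the rank-one superoperator Φ(X) = A · tr(B†X). Then the diamond norm of Φ satisfies ‖Φ‖_◇ ≤ ‖A‖_1 · ‖B‖_∞, where ‖·‖_1 is the trace norm and ‖·‖_∞ the spectral norm. -/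
open scoped ComplexOrder

/-- The trace norm (Schatten 1-norm) of a complex matrix: the trace of `√(AᴴA)`. -/
noncomputable def traceNorm {n : Type*} [Fintype n] [DecidableEq n]
    (A : Matrix n n ℂ) : ℝ :=
  (((Matrix.posSemidef_conjTranspose_mul_self A).1.eigenvectorUnitary : Matrix n n ℂ) *
      Matrix.diagonal (((↑) : ℝ → ℂ) ∘ (Real.sqrt ·) ∘
        (Matrix.posSemidef_conjTranspose_mul_self A).1.eigenvalues) *
      (star (Matrix.posSemidef_conjTranspose_mul_self A).1.eigenvectorUnitary :
        Matrix n n ℂ)).trace.re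

/-- The spectral norm (operator norm on ℓ²) of a complex matrix. -/
noncomputable def specNorm {n : Type*} [Fintype n] [DecidableEq n]
    (A : Matrix n n ℂ) : ℝ :=
  ‖LinearMap.toContinuousLinearMap (Matrix.toEuclideanLin A)‖

/-- The extension `Φ ⊗ id` of a superoperator `Φ` on `L(ℂ^n)` to `L(ℂ^n ⊗ ℂ^m)`. -/
noncomputable def extTensor {n m : Type*} [Fintype n] [Fintype m]
    (Φ : Matrix n n ℂ →ₗ[ℂ] Matrix n n ℂ) (X : Matrix (n × m) (n × m) ℂ) :
    Matrix (n × m) (n × m) ℂ :=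
  Matrix.of fun p q => Φ (Matrix.of fun i j => X (i, p.2) (j, q.2)) p.1 q.1

/-- The diamond norm `‖Φ‖_◇ = ‖Φ ⊗ id‖_{1→1}` of a superoperator on `L(ℂ^n)`. -/
noncomputable def diamondNorm {n : Type*} [Fintype n] [DecidableEq n]
    (Φ : Matrix n n ℂ →ₗ[ℂ] Matrix n n ℂ) : ℝ :=
  ⨆ X : {X : Matrix (n × n) (n × n) ℂ // traceNorm X ≤ 1},
    traceNorm (extTensor Φ X.1)

/-!
Write `|M| = √(Mᴴ M)`, so that `traceNorm M = Re tr |M|`. The polar decomposition `M = W |M|`,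
`Wᴴ M = |M|` with `‖W‖ ≤ 1` gives the duality `‖M‖₁ = max {|tr (K M)| : ‖K‖ ≤ 1}`.

For `Φ(X) = tr(Bᴴ X) • A` one has `(Φ ⊗ id)(X) = A ⊗ Y` with `Y = tr₁((Bᴴ ⊗ 1) X)`, and
`‖A ⊗ Y‖₁ = ‖A‖₁ ‖Y‖₁` because `|A ⊗ Y| = |A| ⊗ |Y|`. By duality, `‖Y‖₁` is the supremum of
`|tr (K Y)| = |tr ((Bᴴ ⊗ K) X)| ≤ ‖Bᴴ ⊗ K‖ ‖X‖₁ ≤ ‖B‖ ‖X‖₁` over contractions `K`.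
-/

section PolarDecomposition

variable {A : Type*} [CStarAlgebra A] [PartialOrder A] [StarOrderedRing A]

theorem CFC.exists_polar_decomposition_of_finite_spectrum (a : A)
    (ha : (spectrum ℝ (star a * a)).Finite) :
    ∃ w : A, ‖w‖ ≤ 1 ∧ a = w * CFC.abs a ∧ star w * a = CFC.abs a := by
  set p := star a * a
  have hp : 0 ≤ p := star_mul_self_nonneg a
  have hc : ∀ f : ℝ → ℝ, ContinuousOn f (spectrum ℝ p) := ha.continuousOn
  have hid : cfc (fun x : ℝ => x) p = p := cfc_id' ℝ p
  have habs : CFC.abs a = cfc Real.sqrt p := (CFC.sqrt_eq_real_sqrt p hp).trans cfcₙ_eq_cfc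
  -- Since `(√0)⁻¹ = 0`, `t` inverts `|a|` on its support and vanishes on its kernel, and `e` is
  -- the projection onto that support.
  set t := cfc (fun x : ℝ => (√x)⁻¹) p
  have ht : star t = t := (cfc_predicate (p := IsSelfAdjoint) _ p).star_eq
  set e := cfc (fun x : ℝ => (√x)⁻¹ * √x) p
  have hte : t * CFC.abs a = e := by rw [habs, ← cfc_mul _ _ p (hc _) (hc _)]
  have htp : t * p = CFC.abs a := by
    rw [habs, ← hid, ← cfc_mul _ _ p (hc _) (hc _), hid]
    exact cfc_congr fun x _ => by simp [Real.div_sqrt, ← div_eq_inv_mul]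
  have he : IsStarProjection e := by
    refine ⟨?_, cfc_predicate _ p⟩
    rw [IsIdempotentElem, ← cfc_mul _ _ p (hc _) (hc _)]
    refine cfc_congr fun x _ => ?_
    rcases eq_or_ne (√x) 0 with h | h <;> simp [h]
  have hpe : p * e = p := by
    conv_rhs => rw [← hid]
    rw [← hid, ← cfc_mul _ _ p (hc _) (hc _), hid]
    refine cfc_congr fun x hx => ?_
    rcases (spectrum_nonneg_of_nonneg hp hx).eq_or_lt with rfl | hx0
    · simp
    · simp [(Real.sqrt_pos.mpr hx0).ne']
  have hae : a * e = a := by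
    rw [← sub_eq_zero, ← CStarRing.star_mul_self_eq_zero_iff, ← mul_sub_one, star_mul, mul_assoc,
      ← mul_assoc (star a), mul_sub_one, hpe, sub_self, mul_zero]
  refine ⟨a * t, ?_, ?_, ?_⟩
  · have hww : star (a * t) * (a * t) = e := by
      rw [star_mul, ht, mul_assoc, ← mul_assoc (star a), ← mul_assoc, htp, habs,
        ← cfc_mul _ _ p (hc _) (hc _)]
      exact cfc_congr fun x _ => mul_comm _ _
    have := he.norm_le
    rw [← hww, CStarRing.norm_star_mul_self] at this
    nlinarith [norm_nonneg (a * t)]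
  · rw [mul_assoc, hte, hae]
  · rw [star_mul, ht, mul_assoc, htp]

end PolarDecomposition

namespace Matrix

open scoped MatrixOrder Kronecker Matrix.Norms.L2Operator

section Kronecker

variable (R : Type*) [CommSemiring R] [StarRing R] (n m : Type*) [Fintype n] [DecidableEq n]
  [Fintype m] [DecidableEq m]

def kroneckerOneStarAlgHom : Matrix n n R →⋆ₐ[R] Matrix (n × m) (n × m) R where
  toFun C := C ⊗ₖ 1
  map_one' := one_kronecker_one
  map_mul' C D := by rw [← mul_kronecker_mul, one_mul]
  map_zero' := zero_kronecker _
  map_add' C D := add_kronecker _ _ _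
  commutes' c := by simp [Algebra.algebraMap_eq_smul_one, smul_kronecker]
  map_star' C := by simp [star_eq_conjTranspose, conjTranspose_kronecker]

def oneKroneckerStarAlgHom : Matrix m m R →⋆ₐ[R] Matrix (n × m) (n × m) R where
  toFun D := 1 ⊗ₖ D
  map_one' := one_kronecker_one
  map_mul' C D := by rw [← mul_kronecker_mul, one_mul]
  map_zero' := kronecker_zero _
  map_add' C D := kronecker_add _ _ _
  commutes' c := by simp [Algebra.algebraMap_eq_smul_one, kronecker_smul]
  map_star' D := by simp [star_eq_conjTranspose, conjTranspose_kronecker]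

end Kronecker

variable {n m : Type*} [Fintype n] [DecidableEq n] [Fintype m] [DecidableEq m]

theorem specNorm_eq_l2_opNorm (A : Matrix n n ℂ) : specNorm A = ‖A‖ := rfl

omit [DecidableEq n] in
theorem norm_entry_le_l2_opNorm (A : Matrix n m ℂ) (i : n) (j : m) : ‖A i j‖ ≤ ‖A‖ := by
  have h := l2_opNorm_mulVec A (EuclideanSpace.single j 1)
  rw [EuclideanSpace.single, PiLp.norm_single, norm_one, mul_one] at h
  refine le_trans ?_ (h.trans' (PiLp.norm_apply_le _ i))
  simp [mulVec_single]

theorem l2_opNorm_kronecker_le (C : Matrix n n ℂ) (D : Matrix m m ℂ) :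
    ‖C ⊗ₖ D‖ ≤ ‖C‖ * ‖D‖ := by
  have h : C ⊗ₖ D = (C ⊗ₖ 1) * (1 ⊗ₖ D) := by rw [← mul_kronecker_mul, mul_one, one_mul]
  rw [h]
  exact (norm_mul_le _ _).trans <| mul_le_mul
    (NonUnitalStarAlgHom.norm_apply_le (kroneckerOneStarAlgHom ℂ n m) C)
    (NonUnitalStarAlgHom.norm_apply_le (oneKroneckerStarAlgHom ℂ n m) D)
    (norm_nonneg _) (norm_nonneg _)

theorem posSemidef_abs (M : Matrix n n ℂ) : (CFC.abs M).PosSemidef :=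
  nonneg_iff_posSemidef.mp (CFC.abs_nonneg M)

theorem traceNorm_eq_re_trace_abs (M : Matrix n n ℂ) : traceNorm M = (CFC.abs M).trace.re := by
  have hM := posSemidef_conjTranspose_mul_self M
  rw [CFC.abs, star_eq_conjTranspose, CFC.sqrt_eq_real_sqrt _ hM.nonneg, cfcₙ_eq_cfc,
    hM.1.cfc_eq, IsHermitian.cfc, Unitary.conjStarAlgAut_apply]
  rfl

theorem traceNorm_nonneg (M : Matrix n n ℂ) : 0 ≤ traceNorm M := by
  rw [traceNorm_eq_re_trace_abs]
  exact (Complex.nonneg_iff.mp (posSemidef_abs M).trace_nonneg).1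

@[simp]
theorem traceNorm_zero : traceNorm (0 : Matrix n n ℂ) = 0 := by
  simp [traceNorm_eq_re_trace_abs]

theorem abs_kronecker (A : Matrix n n ℂ) (B : Matrix m m ℂ) :
    CFC.abs (A ⊗ₖ B) = CFC.abs A ⊗ₖ CFC.abs B := by
  rw [CFC.abs, CFC.sqrt_eq_iff _ _ (star_mul_self_nonneg _)
      ((posSemidef_abs A).kronecker (posSemidef_abs B)).nonneg,
    ← mul_kronecker_mul, CFC.abs_mul_abs, CFC.abs_mul_abs, star_eq_conjTranspose,
    star_eq_conjTranspose, star_eq_conjTranspose, conjTranspose_kronecker, mul_kronecker_mul]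

theorem traceNorm_kronecker (A : Matrix n n ℂ) (B : Matrix m m ℂ) :
    traceNorm (A ⊗ₖ B) = traceNorm A * traceNorm B := by
  have hA := Complex.nonneg_iff.mp (posSemidef_abs A).trace_nonneg
  have hB := Complex.nonneg_iff.mp (posSemidef_abs B).trace_nonneg
  rw [traceNorm_eq_re_trace_abs, abs_kronecker, trace_kronecker, Complex.mul_re, ← hA.2, ← hB.2,
    mul_zero, sub_zero, traceNorm_eq_re_trace_abs, traceNorm_eq_re_trace_abs]

theorem norm_trace_mul_le_of_posSemidef (K : Matrix n n ℂ) {S : Matrix n n ℂ}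
    (hS : S.PosSemidef) : ‖(K * S).trace‖ ≤ ‖K‖ * S.trace.re := by
  obtain ⟨U, d, hd, hS_eq, hS_tr⟩ : ∃ (U : unitary (Matrix n n ℂ)) (d : n → ℝ), (∀ i, 0 ≤ d i) ∧
      S = U * diagonal (fun i => (d i : ℂ)) * star U ∧ S.trace.re = ∑ i, d i :=
    ⟨hS.1.eigenvectorUnitary, hS.1.eigenvalues, hS.eigenvalues_nonneg,
      hS.1.spectral_theorem.trans (Unitary.conjStarAlgAut_apply _ _),
      by simp [hS.1.trace_eq_sum_eigenvalues]⟩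
  have htrace : (K * S).trace = ∑ i, (star U * K * U) i i * d i := by
    rw [hS_eq, ← mul_assoc, trace_mul_cycle, ← mul_assoc]
    simp [trace, mul_diagonal]
  have hnorm : ‖(star U * K * U : Matrix n n ℂ)‖ = ‖K‖ := by
    rw [CStarRing.norm_mul_coe_unitary, CStarRing.norm_coe_unitary_mul]
  rw [htrace, hS_tr, Finset.mul_sum]
  refine (norm_sum_le _ _).trans (Finset.sum_le_sum fun i _ => ?_)
  rw [norm_mul, Complex.norm_real, Real.norm_of_nonneg (hd i), ← hnorm]
  exact mul_le_mul_of_nonneg_right (norm_entry_le_l2_opNorm _ i i) (hd i)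

theorem exists_polar_decomposition (M : Matrix n n ℂ) :
    ∃ W : Matrix n n ℂ, ‖W‖ ≤ 1 ∧ M = W * CFC.abs M ∧ Wᴴ * M = CFC.abs M :=
  CFC.exists_polar_decomposition_of_finite_spectrum M (star M * M).finite_real_spectrum

theorem norm_trace_mul_le (K M : Matrix n n ℂ) : ‖(K * M).trace‖ ≤ ‖K‖ * traceNorm M := by
  obtain ⟨W, hW, hM, -⟩ := exists_polar_decomposition M
  calc ‖(K * M).trace‖ = ‖(K * W * CFC.abs M).trace‖ := by rw [mul_assoc, ← hM]
    _ ≤ ‖K * W‖ * (CFC.abs M).trace.re := norm_trace_mul_le_of_posSemidef _ (posSemidef_abs M)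
    _ ≤ ‖K‖ * traceNorm M := by
      rw [← traceNorm_eq_re_trace_abs]
      gcongr
      · exact traceNorm_nonneg M
      · exact (norm_mul_le K W).trans (mul_le_of_le_one_right (norm_nonneg K) hW)

theorem traceNorm_le_of_forall_norm_trace_mul_le (M : Matrix n n ℂ) {c : ℝ}
    (h : ∀ W : Matrix n n ℂ, ‖W‖ ≤ 1 → ‖(W * M).trace‖ ≤ c) : traceNorm M ≤ c := by
  obtain ⟨W, hW, -, hWM⟩ := exists_polar_decomposition M
  calc traceNorm M = (Wᴴ * M).trace.re := by rw [hWM, traceNorm_eq_re_trace_abs]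
    _ ≤ ‖(Wᴴ * M).trace‖ := Complex.re_le_norm _
    _ ≤ c := h _ (by rwa [l2_opNorm_conjTranspose])

def partialTraceLeft {R : Type*} [AddCommMonoid R] (X : Matrix (n × m) (n × m) R) :
    Matrix m m R :=
  of fun p q => ∑ i, X (i, p) (i, q)

omit [DecidableEq m] in
theorem trace_mul_partialTraceLeft {R : Type*} [Semiring R] (W : Matrix m m R)
    (X : Matrix (n × m) (n × m) R) : (W * partialTraceLeft X).trace = ((1 ⊗ₖ W) * X).trace := by
  simp [trace, mul_apply, partialTraceLeft, Fintype.sum_prod_type, one_apply, Finset.mul_sum]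
  exact (Finset.sum_congr rfl fun _ _ => Finset.sum_comm).trans Finset.sum_comm

theorem traceNorm_partialTraceLeft_kronecker_one_mul_le (C : Matrix n n ℂ)
    (X : Matrix (n × m) (n × m) ℂ) :
    traceNorm (partialTraceLeft ((C ⊗ₖ 1) * X)) ≤ ‖C‖ * traceNorm X := by
  refine traceNorm_le_of_forall_norm_trace_mul_le _ fun W hW => ?_
  rw [trace_mul_partialTraceLeft, ← mul_assoc, ← mul_kronecker_mul, one_mul, mul_one]
  calc ‖((C ⊗ₖ W) * X).trace‖ ≤ ‖C ⊗ₖ W‖ * traceNorm X := norm_trace_mul_le _ _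
    _ ≤ ‖C‖ * traceNorm X := by
      gcongr
      · exact traceNorm_nonneg X
      · exact (l2_opNorm_kronecker_le C W).trans (mul_le_of_le_one_right (norm_nonneg C) hW)

theorem extTensor_smulRight_trace_mulLeft (A C : Matrix n n ℂ) (X : Matrix (n × m) (n × m) ℂ) :
    extTensor (((traceLinearMap n ℂ ℂ).comp (LinearMap.mulLeft ℂ C)).smulRight A) X =
      A ⊗ₖ partialTraceLeft ((C ⊗ₖ 1) * X) := by
  ext ⟨i, p⟩ ⟨j, q⟩
  simp [extTensor, partialTraceLeft, trace, mul_apply, Fintype.sum_prod_type, one_apply, mul_comm]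

end Matrix

/-- For the rank-one superoperator `Φ(X) = tr(Bᴴ X) • A`, the diamond norm is
bounded by `‖A‖₁ · ‖B‖_∞`. -/
theorem stmt_11 {n : Type*} [Fintype n] [DecidableEq n] (A B : Matrix n n ℂ) :
    diamondNorm
        (((Matrix.traceLinearMap n ℂ ℂ).comp
            (LinearMap.mulLeft ℂ B.conjTranspose)).smulRight A)
      ≤ traceNorm A * specNorm B := by
  have : Nonempty {X : Matrix (n × n) (n × n) ℂ // traceNorm X ≤ 1} := ⟨⟨0, by simp⟩⟩
  refine ciSup_le fun ⟨X, hX⟩ => ?_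
  rw [Matrix.extTensor_smulRight_trace_mulLeft, Matrix.traceNorm_kronecker]
  open Matrix Kronecker Matrix.Norms.L2Operator in
  calc traceNorm A * traceNorm (partialTraceLeft ((Bᴴ ⊗ₖ 1) * X))
      ≤ traceNorm A * (‖Bᴴ‖ * traceNorm X) := by
        gcongr
        · exact traceNorm_nonneg A
        · exact traceNorm_partialTraceLeft_kronecker_one_mul_le _ _
    _ ≤ traceNorm A * specNorm B := by
        rw [l2_opNorm_conjTranspose, specNorm_eq_l2_opNorm]
        gcongr
        · exact traceNorm_nonneg A
        · exact mul_le_of_le_one_right (norm_nonneg B) hX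
end

section
/- Let x, y be random variables on a finite probability space taking values in F_2^t, and suppose there is a measure-preserving involution mapping (x,y) to (x+n, y) for a fixed n ∈ F_2^t such that Pr[h(x) = h(x+n)] ≤ 3/4. Then Pr[h(x) = h(y)] ≤ 7/8. -/
open Finset

/-!
Since `(x + n, y)` and `(x, y)` are equidistributed, the events `h(x) ≠ h(y)` and
`h(x + n) ≠ h(y)` have the same probability `q`. Whenever `h(x) ≠ h(x + n)` one of them occurs,
so `1/4 ≤ Pr[h(x) ≠ h(x + n)] ≤ 2q`, i.e. `Pr[h(x) = h(y)] = 1 - q ≤ 7/8`.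
-/

section WeightedEvents

variable {Ω α : Type*} [Fintype Ω]

lemma sum_filter_mem_eq_of_forall_sum_filter_eq [DecidableEq α] (p : Ω → ℝ) {f g : Ω → α}
    (hfg : ∀ a, ∑ ω ∈ univ.filter (fun ω => f ω = a), p ω
      = ∑ ω ∈ univ.filter (fun ω => g ω = a), p ω) (s : Finset α) :
    ∑ ω ∈ univ.filter (fun ω => f ω ∈ s), p ω = ∑ ω ∈ univ.filter (fun ω => g ω ∈ s), p ω := by
  rw [← sum_fiberwise_eq_sum_filter univ s f p, ← sum_fiberwise_eq_sum_filter univ s g p]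
  exact sum_congr rfl fun a _ => hfg a

lemma sum_filter_ne_le_two_mul_of_sum_filter_ne_eq [DecidableEq α] {p : Ω → ℝ}
    (hp : ∀ ω, 0 ≤ p ω) {u v w : Ω → α}
    (hsame : ∑ ω ∈ univ.filter (fun ω => u ω ≠ w ω), p ω
      = ∑ ω ∈ univ.filter (fun ω => v ω ≠ w ω), p ω) :
    ∑ ω ∈ univ.filter (fun ω => u ω ≠ v ω), p ω
      ≤ 2 * ∑ ω ∈ univ.filter (fun ω => u ω ≠ w ω), p ω := by
  classical
  have hsub : univ.filter (fun ω => u ω ≠ v ω)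
      ⊆ univ.filter (fun ω => u ω ≠ w ω) ∪ univ.filter (fun ω => v ω ≠ w ω) := by
    intro ω
    simp only [mem_filter, mem_univ, true_and, mem_union]
    intro huv
    by_contra! h
    exact huv (h.1.trans h.2.symm)
  calc ∑ ω ∈ univ.filter (fun ω => u ω ≠ v ω), p ω
      ≤ ∑ ω ∈ univ.filter (fun ω => u ω ≠ w ω) ∪ univ.filter (fun ω => v ω ≠ w ω), p ω :=
        sum_le_sum_of_subset_of_nonneg hsub fun ω _ _ => hp ω
    _ ≤ ∑ ω ∈ univ.filter (fun ω => u ω ≠ w ω), p ω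
          + ∑ ω ∈ univ.filter (fun ω => v ω ≠ w ω), p ω := by
        rw [← sum_union_inter]; exact le_add_of_nonneg_right (sum_nonneg fun ω _ => hp ω)
    _ = 2 * ∑ ω ∈ univ.filter (fun ω => u ω ≠ w ω), p ω := by rw [← hsame, two_mul]

end WeightedEvents

/-- Let `x, y` be random variables on a finite probability space with values in
`F₂^t`, and suppose that for a fixed `n ∈ F₂^t` the pair `(x+n, y)` has the same
joint distribution as `(x, y)`, and `Pr[h(x) = h(x+n)] ≤ 3/4`.
Then `Pr[h(x) = h(y)] ≤ 7/8`. -/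
theorem stmt_18 {Ω : Type*} [Fintype Ω] (p : Ω → ℝ)
    (hp : ∀ ω, 0 ≤ p ω) (hsum : ∑ ω, p ω = 1)
    (t : ℕ) (x y : Ω → (Fin t → ZMod 2)) (n : Fin t → ZMod 2)
    (hinv : ∀ a b : Fin t → ZMod 2,
      ∑ ω ∈ univ.filter (fun ω => x ω = a ∧ y ω = b), p ω
        = ∑ ω ∈ univ.filter (fun ω => x ω + n = a ∧ y ω = b), p ω)
    (h34 : ∑ ω ∈ univ.filter
        (fun ω => hammingNorm (x ω) = hammingNorm (x ω + n)), p ω ≤ 3 / 4) :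
    ∑ ω ∈ univ.filter
        (fun ω => hammingNorm (x ω) = hammingNorm (y ω)), p ω ≤ 7 / 8 := by
  classical
  have hshift := sum_filter_mem_eq_of_forall_sum_filter_eq p
    (f := fun ω => (x ω, y ω)) (g := fun ω => (x ω + n, y ω))
    (fun ab => by simpa only [Prod.ext_iff] using hinv ab.1 ab.2)
    (univ.filter fun ab => hammingNorm ab.1 ≠ hammingNorm ab.2)
  simp only [mem_filter, mem_univ, true_and] at hshift
  have hle := sum_filter_ne_le_two_mul_of_sum_filter_ne_eq hp hshift
  have hx := sum_filter_add_sum_filter_not univ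
    (fun ω => hammingNorm (x ω) = hammingNorm (x ω + n)) p
  have hy := sum_filter_add_sum_filter_not univ
    (fun ω => hammingNorm (x ω) = hammingNorm (y ω)) p
  rw [hsum] at hx hy
  linarith
end
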